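/- Every ω-regular language L ⊆ Σ^ω admits an ω-congruence of finite index. -/

import Mathlib

open Filter

variable {A : Type*}

/-- The interval coded by `p` occupies positions `p.1, …, p.1 + p.2 - 1` (length `p.2 > 0`). -/
def IntervalLt (p q : ℕ × ℕ) : Prop := p.1 + p.2 ≤ q.1

def IntervalDisj (p q : ℕ × ℕ) : Prop := p.1 + p.2 ≤ q.1 ∨ q.1 + q.2 ≤ p.1

def prefixList (u : ℕ → List A) (m : ℕ) : List A := (List.range m).flatMap u

/-- Prepending a finite word to an ω-word. -/
def prepend (w : List A) (x : ℕ → A) : ℕ → A := fun n =>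
  if h : n < w.length then w.get ⟨n, h⟩ else x (n - w.length)

open Classical in
/-- The infinite concatenation `u 0 · u 1 · u 2 ⋯` of a sequence of finite words, as an
ω-word; meaningful when infinitely many of the `u i` are nonempty. -/
noncomputable def omegaConcat [Inhabited A] (u : ℕ → List A) : ℕ → A := fun n =>
  if h : ∃ m, n < (prefixList u m).length
  then (prefixList u (Nat.find h)).getD n default
  else default

/-- The ω-power `v^ω` of a finite word; meaningful when `v ≠ []`. -/
noncomputable def omegaPow [Inhabited A] (v : List A) : ℕ → A := fun n =>
  v.getD (n % v.length) default

/-- Infinitely many of the words `u i` are nonempty. -/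
def InfOftenNonempty (u : ℕ → List A) : Prop := ∀ n, ∃ m, n ≤ m ∧ u m ≠ []

/-- A relation on finite words has finite index (finitely many classes). -/
def FiniteIndex (r : List A → List A → Prop) : Prop :=
  (Set.range fun w => {v | r w v}).Finite

/-- Compatibility with concatenation. -/
def ConcatCongr (r : List A → List A → Prop) : Prop :=
  ∀ u₁ u₁' u₂ u₂' : List A, r u₁ u₁' → r u₂ u₂' → r (u₁ ++ u₂) (u₁' ++ u₂')

/-- The relation `r` recognizes `L`: relating the blocks of two infinite concatenations
pointwise preserves membership in `L`. -/
def Recognizes [Inhabited A] (r : List A → List A → Prop) (L : Set (ℕ → A)) : Prop :=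
  ∀ u u' : ℕ → List A, InfOftenNonempty u → InfOftenNonempty u' →
    (∀ i, r (u i) (u' i)) → (omegaConcat u ∈ L ↔ omegaConcat u' ∈ L)

/-- Nondeterministic Büchi automaton. -/
structure BuchiAutomaton (A : Type*) where
  Q : Type
  finQ : Finite Q
  init : Set Q
  step : Q → A → Set Q
  acc : Set Q

def BuchiAutomaton.Accepts (M : BuchiAutomaton A) (x : ℕ → A) : Prop :=
  ∃ ρ : ℕ → M.Q, ρ 0 ∈ M.init ∧ (∀ n, ρ (n + 1) ∈ M.step (ρ n) (x n)) ∧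
    ∀ n, ∃ m, n ≤ m ∧ ρ m ∈ M.acc

def OmegaRegular (L : Set (ℕ → A)) : Prop :=
  ∃ M : BuchiAutomaton A, ∀ x, x ∈ L ↔ M.Accepts x

/-- ω-words over `{a, b}` (with `a = true`, `b = false`) of the form `a^{k₁} b a^{k₂} b ⋯`
whose blocks of `a`'s have unbounded size. -/
def Uset : Set (ℕ → Bool) :=
  {x | (∀ n, ∃ m, n ≤ m ∧ x m = false) ∧ ∀ n, ∃ k, ∀ i < n, x (k + i) = true}

/-!
A Büchi automaton `M` induces the congruence identifying two finite words when they have the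
same transition profile: the set of triples `(p, q, b)` such that the word leads from `p` to `q`
along some run that, if `b` holds, visits an accepting state. The profile of `w ++ v` is
determined by the profiles of `w` and `v`, and there are finitely many profiles since `M` has
finitely many states. Cutting an accepting run on `u₀ u₁ u₂ ⋯` at the block boundaries shows
that acceptance depends only on the profiles of the blocks `uᵢ`; conversely, runs on the blocks
with the prescribed profiles glue to an accepting run.
-/

section Blocks

variable {u : ℕ → List A}

def blockStart (u : ℕ → List A) (m : ℕ) : ℕ := (prefixList u m).length

lemma prefixList_succ (u : ℕ → List A) (m : ℕ) :
    prefixList u (m + 1) = prefixList u m ++ u m := by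
  simp [prefixList, List.range_succ]

lemma prefixList_prefix_of_le (u : ℕ → List A) {a b : ℕ} (h : a ≤ b) :
    prefixList u a <+: prefixList u b := by
  induction h with
  | refl => exact List.prefix_refl _
  | step _ ih => exact ih.trans ⟨_, (prefixList_succ u _).symm⟩

lemma blockStart_zero (u : ℕ → List A) : blockStart u 0 = 0 := by
  simp [blockStart, prefixList]

lemma blockStart_succ (u : ℕ → List A) (m : ℕ) :
    blockStart u (m + 1) = blockStart u m + (u m).length := by
  simp [blockStart, prefixList_succ]

lemma blockStart_mono (u : ℕ → List A) : Monotone (blockStart u) :=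
  monotone_nat_of_le_succ fun m => by rw [blockStart_succ]; omega

lemma exists_blockStart_gt (hu : InfOftenNonempty u) (m : ℕ) :
    ∃ m', blockStart u m < blockStart u m' := by
  obtain ⟨m', hmm', hne⟩ := hu m
  have := blockStart_mono u hmm'
  have := List.length_pos_iff.mpr hne
  exact ⟨m' + 1, by rw [blockStart_succ]; omega⟩

lemma exists_lt_blockStart (hu : InfOftenNonempty u) (n : ℕ) : ∃ m, n < blockStart u m := by
  induction n with
  | zero => simpa [blockStart_zero] using exists_blockStart_gt hu 0
  | succ n ih =>
    obtain ⟨m, hm⟩ := ih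
    obtain ⟨m', hm'⟩ := exists_blockStart_gt hu m
    exact ⟨m', by omega⟩

lemma exists_eq_blockStart_add (hu : InfOftenNonempty u) (n : ℕ) :
    ∃ m i, i < (u m).length ∧ n = blockStart u m + i := by
  obtain ⟨b, hb⟩ := exists_lt_blockStart hu n
  induction b with
  | zero => simp [blockStart_zero] at hb
  | succ b ih =>
    by_cases h : n < blockStart u b
    · exact ih h
    · rw [blockStart_succ] at hb
      exact ⟨b, n - blockStart u b, by omega, by omega⟩

lemma exists_glue_blocks {β : Type*} (hu : InfOftenNonempty u) (g : ℕ → ℕ → β)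
    (hg : ∀ m, g m (u m).length = g (m + 1) 0) :
    ∃ ρ : ℕ → β, ∀ m i, i ≤ (u m).length → ρ (blockStart u m + i) = g m i := by
  -- Between two blocks with the same start, all blocks are empty.
  have hconst : ∀ m m', m ≤ m' → blockStart u m = blockStart u m' → g m 0 = g m' 0 := by
    intro m m' hmm'
    induction m', hmm' using Nat.le_induction with
    | base => exact fun _ => rfl
    | succ m' hmm' ih =>
      intro heq
      have h₁ := blockStart_mono u hmm'
      have h₂ := blockStart_succ u m'
      have hlen : (u m').length = 0 := by omega
      rw [ih (by omega), ← hg m', hlen]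
  have hagree : ∀ m i m' i', i ≤ (u m).length → i' ≤ (u m').length → m ≤ m' →
      blockStart u m + i = blockStart u m' + i' → g m i = g m' i' := by
    intro m i m' i' hi hi' hmm' heq
    rcases hmm'.eq_or_lt with rfl | hlt
    · rw [show i = i' by omega]
    · have h₁ := blockStart_mono u (show m + 1 ≤ m' from hlt)
      have h₂ := blockStart_succ u m
      rw [show i = (u m).length by omega, show i' = 0 by omega, hg m]
      exact hconst _ _ hlt (by omega)
  choose bm bi hbi hn using exists_eq_blockStart_add hu
  refine ⟨fun n => g (bm n) (bi n), fun m i hi => ?_⟩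
  have hpos := hn (blockStart u m + i)
  rcases le_total m (bm (blockStart u m + i)) with h | h
  · exact (hagree _ _ _ _ hi (hbi _).le h hpos).symm
  · exact hagree _ _ _ _ (hbi _).le hi h hpos.symm

variable [Inhabited A]

lemma omegaConcat_eq_getD {n b : ℕ} (hb : n < blockStart u b) :
    omegaConcat u n = (prefixList u b).getD n default := by
  have h : ∃ m, n < (prefixList u m).length := ⟨b, hb⟩
  have getD_eq : ∀ {a b}, a ≤ b → n < blockStart u a →
      (prefixList u a).getD n default = (prefixList u b).getD n default := by
    intro a b hab hn
    obtain ⟨t, ht⟩ := prefixList_prefix_of_le u hab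
    rw [← ht, List.getD_append _ _ _ _ hn]
  rw [omegaConcat, dif_pos h]
  rcases le_total (Nat.find h) b with hle | hle
  · exact getD_eq hle (Nat.find_spec h)
  · exact (getD_eq hle hb).symm

lemma getElem?_eq_some_omegaConcat {m i : ℕ} (hi : i < (u m).length) :
    (u m)[i]? = some (omegaConcat u (blockStart u m + i)) := by
  have hb : blockStart u m + i < blockStart u (m + 1) := by rw [blockStart_succ]; omega
  rw [omegaConcat_eq_getD hb, prefixList_succ, blockStart,
    List.getD_append_right _ _ _ _ (Nat.le_add_right _ _), Nat.add_sub_cancel_left,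
    List.getD_eq_getElem _ _ hi, List.getElem?_eq_getElem hi]

end Blocks

lemma finiteIndex_ker {β : Type*} [Finite β] (f : List A → β) :
    FiniteIndex (fun w v => f w = f v) :=
  (Set.finite_range fun b : β => {v | b = f v}).subset (by rintro _ ⟨w, rfl⟩; exact ⟨f w, rfl⟩)

def glueAt {β : Type*} (n : ℕ) (f g : ℕ → β) : ℕ → β := fun i => if i ≤ n then f i else g (i - n)

lemma glueAt_of_le {β : Type*} {n i : ℕ} (f g : ℕ → β) (h : i ≤ n) : glueAt n f g i = f i :=
  if_pos h

lemma glueAt_add {β : Type*} {n : ℕ} {f g : ℕ → β} (h : f n = g 0) (j : ℕ) :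
    glueAt n f g (n + j) = g j := by
  unfold glueAt
  split_ifs with hj
  · rw [show j = 0 by omega, Nat.add_zero, h]
  · rw [Nat.add_sub_cancel_left]

namespace BuchiAutomaton

variable (M : BuchiAutomaton A)

def IsRunOn (w : List A) (f : ℕ → M.Q) : Prop :=
  ∀ i a, w[i]? = some a → f (i + 1) ∈ M.step (f i) a

def profile (w : List A) : Set (M.Q × M.Q × Bool) :=
  {t | ∃ f, M.IsRunOn w f ∧ f 0 = t.1 ∧ f w.length = t.2.1 ∧
    (t.2.2 = true → ∃ i ≤ w.length, f i ∈ M.acc)}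

def AcceptsProfiles (P : ℕ → Set (M.Q × M.Q × Bool)) : Prop :=
  ∃ q : ℕ → M.Q, q 0 ∈ M.init ∧ (∀ m, (q m, q (m + 1), false) ∈ P m) ∧
    ∀ k, ∃ m, k ≤ m ∧ (q m, q (m + 1), true) ∈ P m

variable {M} {w v : List A} {f g : ℕ → M.Q}

lemma mem_profile {p q : M.Q} {b : Bool} :
    (p, q, b) ∈ M.profile w ↔ ∃ f, M.IsRunOn w f ∧ f 0 = p ∧ f w.length = q ∧
      (b = true → ∃ i ≤ w.length, f i ∈ M.acc) :=
  Iff.rfl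

lemma IsRunOn.of_append_left (hf : M.IsRunOn (w ++ v) f) : M.IsRunOn w f := by
  intro i a h
  apply hf i a
  rwa [List.getElem?_append_left (List.getElem?_eq_some_iff.mp h).1]

lemma IsRunOn.of_append_right (hf : M.IsRunOn (w ++ v) f) :
    M.IsRunOn v (fun i => f (w.length + i)) := by
  intro i a h
  apply hf (w.length + i) a
  rwa [List.getElem?_append_right (Nat.le_add_right _ _), Nat.add_sub_cancel_left]

lemma IsRunOn.append (hf : M.IsRunOn w f) (hg : M.IsRunOn v g) (hfg : f w.length = g 0) :
    M.IsRunOn (w ++ v) (glueAt w.length f g) := by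
  intro i a h
  rcases lt_or_ge i w.length with hi | hi
  · rw [List.getElem?_append_left hi] at h
    rw [glueAt_of_le f g hi.le, glueAt_of_le f g hi]
    exact hf i a h
  · obtain ⟨j, rfl⟩ := Nat.exists_eq_add_of_le hi
    rw [List.getElem?_append_right hi, Nat.add_sub_cancel_left] at h
    rw [glueAt_add hfg, Nat.add_assoc, glueAt_add hfg]
    exact hg j a h

lemma mem_profile_append {p q : M.Q} {b : Bool} :
    (p, q, b) ∈ M.profile (w ++ v) ↔ ∃ s b₁ b₂, (p, s, b₁) ∈ M.profile w ∧
      (s, q, b₂) ∈ M.profile v ∧ (b = true → b₁ = true ∨ b₂ = true) := by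
  simp only [mem_profile, List.length_append]
  constructor
  · rintro ⟨f, hf, rfl, rfl, hacc⟩
    have hv : ∃ g, M.IsRunOn v g ∧ g 0 = f w.length ∧ g v.length = f (w.length + v.length) ∧
        (b = true → (¬∃ i ≤ w.length, f i ∈ M.acc) → ∃ j ≤ v.length, g j ∈ M.acc) := by
      refine ⟨_, hf.of_append_right, rfl, rfl, fun hb hw => ?_⟩
      obtain ⟨i, hi, hia⟩ := hacc hb
      have hwi : w.length < i := not_le.mp fun h => hw ⟨i, h, hia⟩
      exact ⟨i - w.length, by omega, by rwa [Nat.add_sub_cancel' hwi.le]⟩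
    obtain ⟨g, hg, hg₀, hg₁, hgacc⟩ := hv
    by_cases hw : ∃ i ≤ w.length, f i ∈ M.acc
    · exact ⟨_, true, false, ⟨f, hf.of_append_left, rfl, rfl, fun _ => hw⟩,
        ⟨g, hg, hg₀, hg₁, nofun⟩, fun _ => .inl rfl⟩
    · exact ⟨_, false, b, ⟨f, hf.of_append_left, rfl, rfl, nofun⟩,
        ⟨g, hg, hg₀, hg₁, fun hb => hgacc hb hw⟩, .inr⟩
  · rintro ⟨s, b₁, b₂, ⟨f, hf, rfl, rfl, hfacc⟩, ⟨g, hg, hg₀, rfl, hgacc⟩, hb⟩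
    refine ⟨glueAt w.length f g, hf.append hg hg₀.symm, glueAt_of_le f g (Nat.zero_le _),
      glueAt_add hg₀.symm _, fun hb' => ?_⟩
    rcases hb hb' with hb₁ | hb₂
    · obtain ⟨i, hi, hia⟩ := hfacc hb₁
      exact ⟨i, by omega, by rwa [glueAt_of_le f g hi]⟩
    · obtain ⟨j, hj, hja⟩ := hgacc hb₂
      exact ⟨w.length + j, by omega, by rwa [glueAt_add hg₀.symm]⟩

lemma profile_append_congr {w w' v v' : List A} (hw : M.profile w = M.profile w')
    (hv : M.profile v = M.profile v') : M.profile (w ++ v) = M.profile (w' ++ v') := by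
  ext ⟨p, q, b⟩
  rw [mem_profile_append, mem_profile_append, hw, hv]

variable [Inhabited A] {u : ℕ → List A}

lemma acceptsProfiles_of_accepts (hu : InfOftenNonempty u) (hx : M.Accepts (omegaConcat u)) :
    M.AcceptsProfiles fun m => M.profile (u m) := by
  obtain ⟨ρ, hinit, hstep, hacc⟩ := hx
  have hblock : ∀ m (b : Bool), (b = true → ∃ i ≤ (u m).length, ρ (blockStart u m + i) ∈ M.acc) →
      (ρ (blockStart u m), ρ (blockStart u (m + 1)), b) ∈ M.profile (u m) := by
    refine fun m b hb => ⟨fun i => ρ (blockStart u m + i), fun i a h => ?_, rfl,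
      by rw [blockStart_succ], hb⟩
    obtain ⟨hi, -⟩ := List.getElem?_eq_some_iff.mp h
    rw [getElem?_eq_some_omegaConcat hi, Option.some_inj] at h
    exact h ▸ hstep _
  refine ⟨fun m => ρ (blockStart u m), by simpa only [blockStart_zero] using hinit,
    fun m => hblock m false nofun, fun k => ?_⟩
  obtain ⟨n, hkn, hna⟩ := hacc (blockStart u k)
  obtain ⟨m, i, hi, rfl⟩ := exists_eq_blockStart_add hu n
  have hkm : k ≤ m := by
    by_contra! hmk
    have := blockStart_mono u (show m + 1 ≤ k from hmk)
    have := blockStart_succ u m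
    omega
  exact ⟨m, hkm, hblock m true fun _ => ⟨i, hi.le, hna⟩⟩

lemma accepts_of_acceptsProfiles (hu : InfOftenNonempty u)
    (hP : M.AcceptsProfiles fun m => M.profile (u m)) : M.Accepts (omegaConcat u) := by
  obtain ⟨q, hinit, hpath, hacc⟩ := hP
  have hrun : ∀ m, ∃ f, M.IsRunOn (u m) f ∧ f 0 = q m ∧ f (u m).length = q (m + 1) ∧
      ((q m, q (m + 1), true) ∈ M.profile (u m) → ∃ i ≤ (u m).length, f i ∈ M.acc) := by
    intro m
    by_cases h : (q m, q (m + 1), true) ∈ M.profile (u m)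
    · obtain ⟨f, hf, hf₀, hf₁, hfacc⟩ := h
      exact ⟨f, hf, hf₀, hf₁, fun _ => hfacc rfl⟩
    · obtain ⟨f, hf, hf₀, hf₁, -⟩ := hpath m
      exact ⟨f, hf, hf₀, hf₁, fun h' => absurd h' h⟩
  choose g hg hg₀ hg₁ hgacc using hrun
  obtain ⟨ρ, hρ⟩ := exists_glue_blocks hu g fun m => (hg₁ m).trans (hg₀ (m + 1)).symm
  refine ⟨ρ, ?_, fun n => ?_, fun n => ?_⟩
  · have h₀ := hρ 0 0 (Nat.zero_le _)
    simp only [blockStart_zero, Nat.add_zero, hg₀] at h₀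
    rwa [h₀]
  · obtain ⟨m, i, hi, rfl⟩ := exists_eq_blockStart_add hu n
    rw [hρ m i hi.le, Nat.add_assoc, hρ m (i + 1) hi]
    exact hg m i _ (getElem?_eq_some_omegaConcat hi)
  · obtain ⟨k, hk⟩ := exists_lt_blockStart hu n
    obtain ⟨m, hkm, hm⟩ := hacc k
    obtain ⟨i, hi, hia⟩ := hgacc m hm
    have := blockStart_mono u hkm
    exact ⟨blockStart u m + i, by omega, by rwa [hρ m i hi]⟩

lemma accepts_omegaConcat_iff (hu : InfOftenNonempty u) :
    M.Accepts (omegaConcat u) ↔ M.AcceptsProfiles fun m => M.profile (u m) :=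
  ⟨acceptsProfiles_of_accepts hu, accepts_of_acceptsProfiles hu⟩

end BuchiAutomaton

/-- Every ω-regular language admits a finite-index ω-congruence. -/
theorem statement3 [Inhabited A] (L : Set (ℕ → A)) (h : OmegaRegular L) :
    ∃ r : List A → List A → Prop,
      Equivalence r ∧ FiniteIndex r ∧ ConcatCongr r ∧ Recognizes r L := by
  obtain ⟨M, hM⟩ := h
  have := M.finQ
  refine ⟨fun w v => M.profile w = M.profile v, ⟨fun _ => rfl, Eq.symm, Eq.trans⟩,
    finiteIndex_ker M.profile, fun _ _ _ _ => BuchiAutomaton.profile_append_congr, ?_⟩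
  intro u u' hu hu' hr
  rw [hM, hM, M.accepts_omegaConcat_iff hu, M.accepts_omegaConcat_iff hu', funext hr]
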